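/- arXiv:1211.3404 — 5 statements merged into one kernel-verified Lean document; each statement's English description precedes it below -/
import Mathlib

section
/- Let E be a complex Banach space, let T : E → E be a compact operator, and let λ be a nonzero complex number. Then the kernel of T − λ (λ denoting λ·id) is a finite-dimensional subspace of E, and the range of T − λ is a closed subspace of E. -/
/-!
On the eigenspace `ker (T - λ)` the identity equals `λ⁻¹ T`, hence is compact, so the eigenspace is
finite dimensional. Being finite dimensional, it has a closed complement `M`, on which `T - λ` is
injective. If `T - λ` were not bounded below on `M`, there would be unit vectors `xₙ ∈ M` with
`(T - λ) xₙ → 0`; compactness of `T` gives a subsequence along which `T xₙ` converges, hence so does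
`xₙ = λ⁻¹ (T xₙ - (T - λ) xₙ)`, and its limit is a unit vector of `M ∩ ker (T - λ) = 0`. So
`T - λ` is anti-Lipschitz on the Banach space `M`, and its range, which equals `(T - λ) M`, is
closed.
-/

open Filter Topology

theorem exists_seq_norm_eq_one_tendsto_zero_of_not_antilipschitz {𝕜 X F : Type*} [RCLike 𝕜]
    [NormedAddCommGroup X] [NormedSpace 𝕜 X] [NormedAddCommGroup F] [NormedSpace 𝕜 F]
    (U : X →L[𝕜] F) (hU : ¬ ∃ K, AntilipschitzWith K U) :
    ∃ u : ℕ → X, (∀ n, ‖u n‖ = 1) ∧ Tendsto (fun n ↦ U (u n)) atTop (𝓝 0) := by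
  rw [antilipschitzWith_iff_exists_mul_le_norm] at hU
  push Not at hU
  choose x hx using fun n : ℕ ↦ hU ((n : ℝ) + 1)⁻¹ (by positivity)
  have hx0 (n : ℕ) : x n ≠ 0 := by
    rintro h
    simpa [h] using hx n
  refine ⟨fun n ↦ (‖x n‖⁻¹ : 𝕜) • x n, fun n ↦ norm_smul_inv_norm (hx0 n), ?_⟩
  refine squeeze_zero_norm (fun n ↦ ?_) tendsto_one_div_add_atTop_nhds_zero_nat
  rw [map_smul, norm_smul, norm_inv, RCLike.norm_ofReal, abs_norm, one_div,
    inv_mul_le_iff₀ (norm_pos_iff.2 (hx0 n)), mul_comm]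
  exact (hx n).le

theorem ContinuousLinearMap.isClosed_range_of_antilipschitzWith_comp_subtypeL
    {𝕜 E F : Type*} [NontriviallyNormedField 𝕜] [NormedAddCommGroup E] [NormedSpace 𝕜 E]
    [CompleteSpace E] [NormedAddCommGroup F] [NormedSpace 𝕜 F] (f : E →L[𝕜] F)
    {M : Submodule 𝕜 E} (hM : IsClosed (M : Set E))
    (hMker : Codisjoint M (LinearMap.ker (f : E →ₗ[𝕜] F))) {K : NNReal}
    (hK : AntilipschitzWith K (f ∘L M.subtypeL)) :
    IsClosed (LinearMap.range (f : E →ₗ[𝕜] F) : Set F) := by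
  have hrange : (LinearMap.range (f : E →ₗ[𝕜] F) : Set F) = Set.range (f ∘L M.subtypeL) := by
    rw [← Submodule.map_eq_range_iff.2 hMker]
    ext
    simp
  have : CompleteSpace M := hM.completeSpace_coe
  rw [hrange]
  exact hK.isClosed_range (f ∘L M.subtypeL).uniformContinuous

namespace IsCompactOperator

section NontriviallyNormedField

variable {𝕜 E : Type*} [NontriviallyNormedField 𝕜] [NormedAddCommGroup E] [NormedSpace 𝕜 E]
  {T : E →L[𝕜] E} {μ : 𝕜}

theorem finiteDimensional_ker_sub_smul [CompleteSpace 𝕜] (hT : IsCompactOperator T) (hμ : μ ≠ 0) :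
    FiniteDimensional 𝕜
      (LinearMap.ker ((T - μ • ContinuousLinearMap.id 𝕜 E : E →L[𝕜] E) : E →ₗ[𝕜] E)) := by
  set N := LinearMap.ker ((T - μ • ContinuousLinearMap.id 𝕜 E : E →L[𝕜] E) : E →ₗ[𝕜] E)
  have hT_eq (v : E) (hv : v ∈ N) : T v = μ • v := by
    simpa [N, sub_eq_zero] using hv
  have hmaps (v : E) (hv : v ∈ N) : T v ∈ N := by
    rw [hT_eq v hv]
    exact N.smul_mem μ hv
  have hid : IsCompactOperator (id : N → N) := by
    have hrestrict : (id : N → N) = μ⁻¹ • (T : E →ₗ[𝕜] E).restrict hmaps := by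
      funext v
      ext
      simp [hT_eq v v.2, inv_smul_smul₀ hμ]
    rw [hrestrict]
    exact (hT.restrict hmaps (ContinuousLinearMap.isClosed_ker _)).smul μ⁻¹
  exact .of_isCompactOperator_id hid

theorem exists_tendsto_subseq_of_tendsto_sub_smul (hT : IsCompactOperator T) (hμ : μ ≠ 0)
    {x : ℕ → E} {R : ℝ} (hx : ∀ n, ‖x n‖ ≤ R)
    (hSx : Tendsto (fun n ↦ (T - μ • ContinuousLinearMap.id 𝕜 E) (x n)) atTop (𝓝 0)) :
    ∃ y, (T - μ • ContinuousLinearMap.id 𝕜 E) y = 0 ∧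
      ∃ φ : ℕ → ℕ, StrictMono φ ∧ Tendsto (x ∘ φ) atTop (𝓝 y) := by
  set S := T - μ • ContinuousLinearMap.id 𝕜 E
  obtain ⟨K, hK, hTK⟩ := hT.image_closedBall_subset_compact R
  obtain ⟨z, -, φ, hφ, hz⟩ :=
    hK.tendsto_subseq fun n ↦ hTK ⟨x n, mem_closedBall_zero_iff.2 (hx n), rfl⟩
  have hlim : Tendsto (x ∘ φ) atTop (𝓝 (μ⁻¹ • z)) := by
    have h := (hz.sub (hSx.comp hφ.tendsto_atTop)).const_smul μ⁻¹
    rw [sub_zero] at h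
    refine h.congr fun n ↦ ?_
    simp [S, inv_smul_smul₀ hμ]
  exact ⟨μ⁻¹ • z,
    tendsto_nhds_unique ((S.continuous.tendsto _).comp hlim) (hSx.comp hφ.tendsto_atTop),
    φ, hφ, hlim⟩

end NontriviallyNormedField

theorem exists_antilipschitzWith_sub_smul_comp_subtypeL {𝕜 E : Type*} [RCLike 𝕜]
    [NormedAddCommGroup E] [NormedSpace 𝕜 E] {T : E →L[𝕜] E} {μ : 𝕜}
    (hT : IsCompactOperator T) (hμ : μ ≠ 0) {M : Submodule 𝕜 E} (hM : IsClosed (M : Set E))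
    (hMker : Disjoint M
      (LinearMap.ker ((T - μ • ContinuousLinearMap.id 𝕜 E : E →L[𝕜] E) : E →ₗ[𝕜] E))) :
    ∃ K, AntilipschitzWith K ((T - μ • ContinuousLinearMap.id 𝕜 E) ∘L M.subtypeL) := by
  by_contra hK
  obtain ⟨u, hu_norm, hu_lim⟩ := exists_seq_norm_eq_one_tendsto_zero_of_not_antilipschitz _ hK
  obtain ⟨y, hy_ker, φ, hφ, hy⟩ := hT.exists_tendsto_subseq_of_tendsto_sub_smul hμ
    (x := fun n ↦ (u n : E)) (R := 1) (fun n ↦ (hu_norm n).le) hu_lim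
  have hy_mem : y ∈ M := hM.mem_of_tendsto hy (.of_forall fun n ↦ (u (φ n)).2)
  have hy_norm : ‖y‖ = 1 :=
    tendsto_nhds_unique hy.norm (tendsto_const_nhds.congr fun n ↦ (hu_norm (φ n)).symm)
  have hy_zero : y = 0 := (Submodule.disjoint_def.1 hMker) y hy_mem hy_ker
  simp [hy_zero] at hy_norm

end IsCompactOperator

/-- If `T` is a compact operator on a complex Banach space `E` and `λ ≠ 0`, then
`ker (T - λ)` is finite dimensional and `range (T - λ)` is closed in `E`. -/
theorem compact_operator_ker_finiteDimensional_and_range_closed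
    {E : Type*} [NormedAddCommGroup E] [NormedSpace ℂ E] [CompleteSpace E]
    (T : E →L[ℂ] E) (hT : IsCompactOperator T) (lam : ℂ) (hlam : lam ≠ 0) :
    FiniteDimensional ℂ (LinearMap.ker ((T - lam • ContinuousLinearMap.id ℂ E : E →L[ℂ] E) : E →ₗ[ℂ] E)) ∧
    IsClosed ((LinearMap.range ((T - lam • ContinuousLinearMap.id ℂ E : E →L[ℂ] E) : E →ₗ[ℂ] E) : Submodule ℂ E) : Set E) := by
  set S := T - lam • ContinuousLinearMap.id ℂ E
  have hker := hT.finiteDimensional_ker_sub_smul hlam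
  refine ⟨hker, ?_⟩
  obtain ⟨M, hM, hcompl⟩ := (Submodule.ClosedComplemented.of_finiteDimensional
    (LinearMap.ker (S : E →ₗ[ℂ] E))).exists_isClosed_isCompl
  obtain ⟨K, hK⟩ := hT.exists_antilipschitzWith_sub_smul_comp_subtypeL hlam hM hcompl.symm.disjoint
  exact S.isClosed_range_of_antilipschitzWith_comp_subtypeL hM hcompl.symm.codisjoint hK
end

section
/- Let E be a complex Banach space and let T : E → E be a compact operator. Then: (i) every nonzero λ in the spectrum σ(T) is an eigenvalue of T, and is also an eigenvalue of the Banach-space adjoint T*; (ii) for every r > 0, the set of eigenvalues λ of T with |λ| > r is finite; consequently (iii) σ(T) is at most countable and its only possible limit point in ℂ is 0. -/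
/-- The Banach-space adjoint (transpose) of a bounded operator, `ρ ↦ ρ ∘ S`,
as a linear map between the continuous dual spaces. -/
noncomputable def banachAdjoint {E F : Type*} [NormedAddCommGroup E] [NormedSpace ℂ E]
    [NormedAddCommGroup F] [NormedSpace ℂ F] (S : E →L[ℂ] F) :
    StrongDual ℂ F →ₗ[ℂ] StrongDual ℂ E where
  toFun ρ := ρ.comp S
  map_add' ρ σ := by ext x; rfl
  map_smul' c ρ := by ext x; rfl

/-!
The nonzero spectrum of a compact operator consists of eigenvalues by the Fredholm alternative.
Everything else comes from one Riesz-lemma argument: a strictly increasing chain of closed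
subspaces `V n` with `(T - μ n) (V (n + 1)) ⊆ V n` and `r ≤ ‖μ n‖` yields unit vectors
`e n ∈ V (n + 1)` at distance `≥ 1/2` from `V n`, whose images `T (e n)` are then
`r/2`-separated, which compactness forbids. For the spans of eigenvectors with distinct
eigenvalues this bounds the number of eigenvalues outside each disc; for the kernels of
`(T - λ) ^ n` it shows that `T - λ` cannot be surjective with a nontrivial kernel. As `T - λ` also
has closed range, for an eigenvalue `λ ≠ 0` its range is a proper closed subspace, and a
functional vanishing on it lies in the kernel of the adjoint.
-/

open Filter Topology Module End

section

variable {𝕜 E : Type*} [RCLike 𝕜] [NormedAddCommGroup E] [NormedSpace 𝕜 E]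

theorem Submodule.riesz_lemma_of_lt {F G : Submodule 𝕜 E} (hG : IsClosed (G : Set E))
    (hGF : G < F) {r : ℝ} (hr : r < 1) : ∃ x ∈ F, ‖x‖ = 1 ∧ ∀ y ∈ G, r ≤ ‖x - y‖ := by
  obtain ⟨x, hxF, hxG⟩ := SetLike.exists_of_lt hGF
  obtain ⟨x₀, -, hx₀, hsep⟩ := riesz_lemma_of_lt_one (F := G.comap F.subtype)
    (hG.preimage continuous_subtype_val) ⟨⟨x, hxF⟩, hxG⟩ hr
  exact ⟨x₀, x₀.2, hx₀, fun y hy => hsep ⟨y, hGF.le hy⟩ hy⟩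

namespace IsCompactOperator

variable {T : E →L[𝕜] E}

theorem exists_strictMono_tendsto_apply (hT : IsCompactOperator T) {x : ℕ → E} {C : ℝ}
    (hx : ∀ n, ‖x n‖ ≤ C) :
    ∃ y, ∃ φ : ℕ → ℕ, StrictMono φ ∧ Tendsto (fun n => T (x (φ n))) atTop (𝓝 y) := by
  obtain ⟨K, hK, hTK⟩ := hT.image_closedBall_subset_compact C
  obtain ⟨y, -, φ, hφ, hy⟩ := hK.tendsto_subseq fun n => hTK ⟨x n, by simpa using hx n, rfl⟩
  exact ⟨y, φ, hφ, hy⟩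

theorem exists_lt_norm_apply_sub_apply_lt (hT : IsCompactOperator T) {x : ℕ → E} {C : ℝ}
    (hx : ∀ n, ‖x n‖ ≤ C) {δ : ℝ} (hδ : 0 < δ) : ∃ m n, m < n ∧ ‖T (x n) - T (x m)‖ < δ := by
  obtain ⟨y, φ, hφ, hy⟩ := hT.exists_strictMono_tendsto_apply hx
  obtain ⟨N, hN⟩ := Metric.cauchySeq_iff'.mp hy.cauchySeq δ hδ
  exact ⟨φ N, φ (N + 1), hφ N.lt_succ_self, by simpa [dist_eq_norm] using hN (N + 1) N.le_succ⟩

theorem not_strictMono_of_apply_sub_smul_mem (hT : IsCompactOperator T) {V : ℕ → Submodule 𝕜 E}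
    (hV : ∀ n, IsClosed (V n : Set E)) {μ : ℕ → 𝕜} {r : ℝ} (hr : 0 < r) (hμ : ∀ n, r ≤ ‖μ n‖)
    (hTV : ∀ n, ∀ x ∈ V (n + 1), T x - μ n • x ∈ V n) : ¬ StrictMono V := by
  intro hmono
  choose e heV he hsep using fun n =>
    Submodule.riesz_lemma_of_lt (hV n) (hmono n.lt_succ_self) (r := 1 / 2) (by norm_num)
  obtain ⟨m, n, hmn, hlt⟩ :=
    hT.exists_lt_norm_apply_sub_apply_lt (fun n => (he n).le) (half_pos hr)
  have hμn : μ n ≠ 0 := norm_pos_iff.mp (hr.trans_le (hμ n))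
  have hTem : T (e m) ∈ V n := by
    have : T (e m) = (T (e m) - μ m • e m) + μ m • e m := by abel
    refine hmono.monotone hmn ?_
    rw [this]
    exact add_mem (hmono.monotone m.le_succ (hTV m _ (heV m))) ((V (m + 1)).smul_mem _ (heV m))
  set w := (μ n)⁻¹ • (T (e m) - (T (e n) - μ n • e n))
  have hw : w ∈ V n := (V n).smul_mem _ (sub_mem hTem (hTV n _ (heV n)))
  have hTe : T (e n) - T (e m) = μ n • (e n - w) := by
    simp only [w, smul_sub, smul_inv_smul₀ hμn]
    abel
  have : r / 2 ≤ ‖T (e n) - T (e m)‖ := by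
    rw [hTe, norm_smul]
    nlinarith [hsep n w hw, hμ n]
  linarith

theorem finite_setOf_hasEigenvalue_lt_norm (hT : IsCompactOperator T) {r : ℝ} (hr : 0 < r) :
    {μ | HasEigenvalue (T : End 𝕜 E) μ ∧ r < ‖μ‖}.Finite := by
  by_contra hinf
  let f := Set.Infinite.natEmbedding _ hinf
  let μ : ℕ → 𝕜 := fun n => f n
  choose v hv using fun n => (f n).2.1.exists_hasEigenvector
  have hli : LinearIndependent 𝕜 v :=
    eigenvectors_linearIndependent' (T : End 𝕜 E) μ (fun m n h => f.injective (Subtype.ext h)) v hv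
  let V : ℕ → Submodule 𝕜 E := fun n => Submodule.span 𝕜 (v '' Set.Iio n)
  have hV : ∀ n, IsClosed (V n : Set E) := fun n =>
    haveI := FiniteDimensional.span_of_finite 𝕜 ((Set.finite_Iio n).image v)
    Submodule.closed_of_finiteDimensional _
  have hTV : ∀ n, ∀ x ∈ V (n + 1), T x - μ n • x ∈ V n := by
    intro n x hx
    have hle : V (n + 1) ≤ (V n).comap ((T : End 𝕜 E) - μ n • 1) := by
      rw [Submodule.span_le]
      rintro - ⟨i, hi, rfl⟩
      have hvi : ((T : End 𝕜 E) - μ n • 1) (v i) = (μ i - μ n) • v i := by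
        simp [(hv i).apply_eq_smul, sub_smul, μ]
      rcases Nat.lt_succ_iff_lt_or_eq.mp hi with hi | rfl
      · simpa [hvi] using (V n).smul_mem (μ i - μ n) (Submodule.subset_span ⟨i, hi, rfl⟩)
      · simp [hvi]
    simpa using hle hx
  refine hT.not_strictMono_of_apply_sub_smul_mem hV hr (fun n => (f n).2.2.le) hTV ?_
  refine strictMono_nat_of_lt_succ fun n => SetLike.lt_iff_le_and_exists.mpr
    ⟨Submodule.span_mono (Set.image_mono (Set.Iio_subset_Iio n.le_succ)), v n,
      Submodule.subset_span ⟨n, n.lt_succ_self, rfl⟩, hli.notMem_span_image (by simp)⟩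

theorem exists_strictMono_tendsto_of_tendsto_sub_smul (hT : IsCompactOperator T) {μ : 𝕜}
    (hμ : μ ≠ 0) {x : ℕ → E} {C : ℝ} (hx : ∀ n, ‖x n‖ ≤ C) {y : E}
    (hy : Tendsto (fun n => (T - μ • 1) (x n)) atTop (𝓝 y)) :
    ∃ z, ∃ φ : ℕ → ℕ, StrictMono φ ∧ Tendsto (fun n => x (φ n)) atTop (𝓝 z) ∧
      (T - μ • 1) z = y := by
  obtain ⟨w, φ, hφ, hw⟩ := hT.exists_strictMono_tendsto_apply hx
  have hyφ := hy.comp hφ.tendsto_atTop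
  have hxφ : Tendsto (fun n => x (φ n)) atTop (𝓝 (μ⁻¹ • (w - y))) := by
    refine ((hw.sub hyφ).const_smul μ⁻¹).congr fun n => ?_
    simp [inv_smul_smul₀ hμ]
  exact ⟨_, φ, hφ, hxφ,
    tendsto_nhds_unique (((T - μ • 1).continuous.tendsto _).comp hxφ) hyφ⟩

theorem exists_pos_mul_norm_mk_le_norm (hT : IsCompactOperator T) {μ : 𝕜} (hμ : μ ≠ 0) :
    ∃ c > 0, ∀ x : E,
      c * ‖(Submodule.Quotient.mk x : E ⧸ LinearMap.ker ((T - μ • 1 : E →L[𝕜] E) : E →ₗ[𝕜] E))‖ ≤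
        ‖(T - μ • 1) x‖ := by
  set S := T - μ • 1
  set N := LinearMap.ker (S : E →ₗ[𝕜] E)
  by_contra! h
  have hsmall : ∀ ε > 0, ∃ x : E,
      ‖x‖ ≤ 2 ∧ ‖(Submodule.Quotient.mk x : E ⧸ N)‖ = 1 ∧ ‖S x‖ < ε := by
    intro ε hε
    obtain ⟨x, hx⟩ := h ε hε
    set q := ‖(Submodule.Quotient.mk x : E ⧸ N)‖
    have hq : 0 < q := by
      by_contra! hq
      nlinarith [norm_nonneg (S x), norm_nonneg (Submodule.Quotient.mk x : E ⧸ N)]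
    set a := ((q⁻¹ : ℝ) : 𝕜) • x
    have ha : ‖(Submodule.Quotient.mk a : E ⧸ N)‖ = 1 := by
      rw [Submodule.Quotient.mk_smul, norm_smul]
      simp [q, hq.ne']
    obtain ⟨b, hb, hbn⟩ := Submodule.Quotient.norm_mk_lt (Submodule.Quotient.mk a : E ⧸ N) one_pos
    have hSb : S b = S a := by
      rw [← sub_eq_zero, ← map_sub]
      exact (Submodule.Quotient.eq N).mp hb
    refine ⟨b, by linarith, by rw [hb, ha], ?_⟩
    rw [hSb, map_smul, norm_smul]
    simp only [norm_algebraMap', norm_inv, Real.norm_of_nonneg hq.le]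
    rwa [inv_mul_lt_iff₀ hq, mul_comm]
  choose x hx2 hx1 hxS using fun n : ℕ => hsmall (1 / (n + 1)) Nat.one_div_pos_of_nat
  have hS0 : Tendsto (fun n => S (x n)) atTop (𝓝 0) :=
    squeeze_zero_norm (fun n => (hxS n).le) tendsto_one_div_add_atTop_nhds_zero_nat
  obtain ⟨z, φ, -, hz, hSz⟩ := hT.exists_strictMono_tendsto_of_tendsto_sub_smul hμ hx2 hS0
  obtain ⟨n, hn⟩ :=
    ((tendsto_iff_norm_sub_tendsto_zero.mp hz).eventually (gt_mem_nhds one_pos)).exists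
  have hmk : (Submodule.Quotient.mk (x (φ n)) : E ⧸ N) = Submodule.Quotient.mk (x (φ n) - z) := by
    rw [Submodule.Quotient.mk_sub, (Submodule.Quotient.mk_eq_zero N).mpr hSz, sub_zero]
  have := Submodule.Quotient.norm_mk_le N (x (φ n) - z)
  rw [← hmk, hx1] at this
  linarith

theorem isClosed_range_sub_smul (hT : IsCompactOperator T) {μ : 𝕜} (hμ : μ ≠ 0) :
    IsClosed (Set.range (T - μ • 1 : E →L[𝕜] E)) := by
  set S := T - μ • 1
  obtain ⟨c, hc, hbound⟩ := hT.exists_pos_mul_norm_mk_le_norm hμ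
  refine isClosed_of_closure_subset fun y hy => ?_
  obtain ⟨s, hs, hsy⟩ := mem_closure_iff_seq_limit.mp hy
  choose u hu using hs
  choose x hxu hx using fun n =>
    Submodule.Quotient.norm_mk_lt
      (Submodule.Quotient.mk (u n) : E ⧸ LinearMap.ker (S : E →ₗ[𝕜] E)) one_pos
  have hSx : ∀ n, S (x n) = s n := fun n => by
    rw [← hu n, ← sub_eq_zero, ← map_sub]
    exact (Submodule.Quotient.eq _).mp (hxu n)
  obtain ⟨C, hC⟩ := (Metric.isBounded_range_of_tendsto s hsy).exists_norm_le
  have hxC : ∀ n, ‖x n‖ ≤ C / c + 1 := fun n => by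
    have hmk : ‖(Submodule.Quotient.mk (u n) : E ⧸ LinearMap.ker (S : E →ₗ[𝕜] E))‖ ≤ C / c := by
      rw [le_div_iff₀ hc, mul_comm]
      exact (hbound (u n)).trans ((hu n).symm ▸ hC _ ⟨n, rfl⟩)
    linarith [hx n]
  have hSxy : Tendsto (fun n => S (x n)) atTop (𝓝 y) := by simpa only [hSx] using hsy
  obtain ⟨z, -, -, -, hz⟩ := hT.exists_strictMono_tendsto_of_tendsto_sub_smul hμ hxC hSxy
  exact ⟨z, hz⟩

theorem injective_sub_smul_of_surjective (hT : IsCompactOperator T) {μ : 𝕜} (hμ : μ ≠ 0)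
    (hS : Function.Surjective (T - μ • 1 : E →L[𝕜] E)) :
    Function.Injective (T - μ • 1 : E →L[𝕜] E) := by
  set S := T - μ • 1
  refine (injective_iff_map_eq_zero S).mpr fun x₀ hx₀ => by_contra fun hx₀' => ?_
  refine hT.not_strictMono_of_apply_sub_smul_mem
    (V := fun n => LinearMap.ker ((S ^ n : E →L[𝕜] E) : E →ₗ[𝕜] E)) (μ := fun _ => μ)
    (fun n => (S ^ n).isClosed_ker) (norm_pos_iff.mpr hμ) (fun _ => le_rfl)
    (fun n x hx => by simpa [pow_succ, S] using hx) ?_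
  refine strictMono_nat_of_lt_succ fun n => SetLike.lt_iff_le_and_exists.mpr ⟨fun x hx => ?_, ?_⟩
  · change (S ^ (n + 1)) x = 0
    rw [pow_succ', mul_apply_eq_comp, show (S ^ n) x = 0 from hx, map_zero]
  · obtain ⟨x, hx⟩ := (hS.iterate n) x₀
    rw [← FunLike.coe_pow_eq_iterate] at hx
    refine ⟨x, ?_, ?_⟩
    · change (S ^ (n + 1)) x = 0
      rw [pow_succ', mul_apply_eq_comp, hx, hx₀]
    · change (S ^ n) x ≠ 0
      rwa [hx]

end IsCompactOperator

theorem ContinuousLinearMap.ker_sub_smul_one_eq_eigenspace (T : E →L[𝕜] E) (μ : 𝕜) :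
    LinearMap.ker ((T - μ • 1 : E →L[𝕜] E) : E →ₗ[𝕜] E) = eigenspace (T : End 𝕜 E) μ := by
  rw [eigenspace_def]
  rfl

end

theorem ker_banachAdjoint_ne_bot {E F : Type*} [NormedAddCommGroup E] [NormedSpace ℂ E]
    [NormedAddCommGroup F] [NormedSpace ℂ F] {S : E →L[ℂ] F} (hclosed : IsClosed (Set.range S))
    (hsurj : ¬ Function.Surjective S) : LinearMap.ker (banachAdjoint S) ≠ ⊥ := by
  obtain ⟨y, hy⟩ := not_forall.mp hsurj
  set R := LinearMap.range (S : E →ₗ[ℂ] F)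
  have : IsClosed (R : Set F) := hclosed
  obtain ⟨f, hf⟩ := SeparatingDual.exists_ne_zero (R := ℂ) (x := (Submodule.Quotient.mk y : F ⧸ R))
    (by simpa [R] using hy)
  refine (Submodule.ne_bot_iff _).mpr ⟨f.comp R.mkQL, LinearMap.mem_ker.mpr ?_, fun h => hf ?_⟩
  · ext x
    have hSx : (Submodule.Quotient.mk (S x) : F ⧸ R) = 0 :=
      (Submodule.Quotient.mk_eq_zero R).mpr (LinearMap.mem_range_self _ x)
    simp [banachAdjoint, hSx]
  · simpa using congrArg (· y) h

section

variable {α : Type*} [NormedAddCommGroup α] {s : Set α}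

theorem Set.countable_of_forall_finite_lt_norm (h : ∀ r > 0, {x ∈ s | r < ‖x‖}.Finite) :
    s.Countable := by
  have hs : s ⊆ insert 0 (⋃ n : ℕ, {x ∈ s | 1 / (n + 1 : ℝ) < ‖x‖}) := by
    intro x hx
    rcases eq_or_ne x 0 with rfl | hx0
    · exact Set.mem_insert _ _
    · obtain ⟨n, hn⟩ := exists_nat_one_div_lt (norm_pos_iff.mpr hx0)
      exact Set.mem_insert_of_mem _ (Set.mem_iUnion.mpr ⟨n, hx, hn⟩)
  exact ((Set.countable_iUnion fun n => (h _ Nat.one_div_pos_of_nat).countable).insert 0).mono hs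

theorem not_accPt_of_forall_finite_lt_norm (h : ∀ r > 0, {x ∈ s | r < ‖x‖}.Finite) {z : α}
    (hz : z ≠ 0) : ¬ AccPt z (𝓟 s) := fun hacc =>
  have hz' : 0 < ‖z‖ := norm_pos_iff.mpr hz
  have hU : {x : α | ‖z‖ / 2 < ‖x‖} ∈ 𝓝 z :=
    (isOpen_lt continuous_const continuous_norm).mem_nhds (half_lt_self hz')
  ((h _ (half_pos hz')).subset fun _ hx => ⟨hx.2, hx.1⟩).not_infinite
    (Set.Infinite.of_accPt (hacc.nhds_inter hU))

end

/-- For a compact operator `T` on a complex Banach space `E`: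
(i) every nonzero `λ` in the spectrum of `T` is an eigenvalue of `T` and of the
Banach-space adjoint `T*`;
(ii) for every `r > 0`, the set of eigenvalues `λ` of `T` with `|λ| > r` is finite;
(iii) the spectrum of `T` is countable and its only possible accumulation point in `ℂ`
is `0`. -/
theorem compact_operator_spectrum
    {E : Type*} [NormedAddCommGroup E] [NormedSpace ℂ E] [CompleteSpace E]
    (T : E →L[ℂ] E) (hT : IsCompactOperator T) :
    (∀ lam ∈ spectrum ℂ T, lam ≠ 0 →
        LinearMap.ker ((T - lam • ContinuousLinearMap.id ℂ E : E →L[ℂ] E) : E →ₗ[ℂ] E) ≠ ⊥ ∧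
        LinearMap.ker (banachAdjoint (T - lam • ContinuousLinearMap.id ℂ E)) ≠ ⊥) ∧
    (∀ r : ℝ, 0 < r →
        {lam : ℂ | LinearMap.ker ((T - lam • ContinuousLinearMap.id ℂ E : E →L[ℂ] E) : E →ₗ[ℂ] E) ≠ ⊥ ∧
          r < ‖lam‖}.Finite) ∧
    (spectrum ℂ T).Countable ∧
    (∀ z : ℂ, z ≠ 0 → ¬ AccPt z (Filter.principal (spectrum ℂ T))) := by
  simp only [← ContinuousLinearMap.one_def, ContinuousLinearMap.ker_sub_smul_one_eq_eigenspace]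
  have heig : ∀ μ ∈ spectrum ℂ T, μ ≠ 0 → HasEigenvalue (T : End ℂ E) μ := fun μ hμ hμ0 =>
    (hT.hasEigenvalue_iff_mem_spectrum hμ0).mpr hμ
  have hfin : ∀ r > 0, {μ ∈ spectrum ℂ T | r < ‖μ‖}.Finite := fun r hr =>
    (hT.finite_setOf_hasEigenvalue_lt_norm hr).subset fun μ ⟨hμ, hrμ⟩ =>
      ⟨heig μ hμ (norm_pos_iff.mp (hr.trans hrμ)), hrμ⟩
  refine ⟨fun μ hμ hμ0 => ⟨heig μ hμ hμ0, ker_banachAdjoint_ne_bot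
      (hT.isClosed_range_sub_smul hμ0) fun hsurj => heig μ hμ hμ0 ?_⟩,
    fun r hr => hT.finite_setOf_hasEigenvalue_lt_norm hr,
    Set.countable_of_forall_finite_lt_norm hfin,
    fun z hz => not_accPt_of_forall_finite_lt_norm hfin hz⟩
  exact (T.ker_sub_smul_one_eq_eigenspace μ).symm.trans
    (LinearMap.ker_eq_bot.mpr (hT.injective_sub_smul_of_surjective hμ0 hsurj))
end

section
/- Let A be a C*-algebra, let B be an involutive complex Banach algebra, and let φ : A → B be an injective algebra homomorphism satisfying φ(a*) = φ(a)* for all a ∈ A. Then ‖φ(a)‖ ≥ ‖a‖ for all a ∈ A. -/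
/-!
Let `x` be normal with `‖φ x‖ < ‖x‖` and pick `‖φ x‖ < s < ‖x‖`. Take continuous cut-offs `e`,
vanishing for `|z| ≤ ‖φ x‖` and equal to `1` for `|z| ≥ s`, and `f`, vanishing for `|z| ≤ s`
but not at the points of modulus `‖x‖` of the quasispectrum of `x`, which exist since `x` is
normal. In the closed commutative subalgebra generated by the image of `C(σ(x))`, every character
is evaluation at some `w` with `|w| ≤ ‖φ x‖`, so `φ (e x)` has spectral radius `0` there and
`‖φ (eⁿ x)‖ → 0` by Gelfand's formula. As `f = f eⁿ`, `φ (f x) = φ (f x) φ (eⁿ x) → 0`, so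
`φ (f x) = 0` and, by injectivity, `f x = 0`, which is absurd. For arbitrary `a` the C⋆-identity
gives `‖a‖² = ‖a⋆ a‖ ≤ ‖φ (a⋆ a)‖ ≤ ‖φ a‖²`.
-/

open Filter Topology WeakDual
open scoped NNReal ENNReal

theorem tendsto_norm_pow_of_spectralRadius_eq_zero {𝔅 : Type*} [NormedRing 𝔅]
    [NormedAlgebra ℂ 𝔅] [CompleteSpace 𝔅] {a : 𝔅} (ha : spectralRadius ℂ a = 0) :
    Tendsto (fun n ↦ ‖a ^ n‖) atTop (𝓝 0) := by
  have hgelfand := spectrum.pow_nnnorm_pow_one_div_tendsto_nhds_spectralRadius a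
  rw [ha] at hgelfand
  have hhalf : (0 : ℝ≥0∞) < ((2⁻¹ : ℝ≥0) : ℝ≥0∞) := by simp
  refine squeeze_zero' (Eventually.of_forall fun n ↦ norm_nonneg _) ?_
    (tendsto_pow_atTop_nhds_zero_of_lt_one (r := (2⁻¹ : ℝ)) (by norm_num) (by norm_num))
  filter_upwards [hgelfand.eventually_lt_const hhalf, eventually_ge_atTop 1] with n hn hn1
  have hn0 : (0 : ℝ) < n := by exact_mod_cast hn1
  rw [one_div, ENNReal.rpow_inv_lt_iff hn0, ENNReal.rpow_natCast] at hn
  have : ‖a ^ n‖₊ < (2⁻¹ : ℝ≥0) ^ n := by exact_mod_cast hn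
  exact_mod_cast this.le

theorem ContinuousMap.exists_algHom_apply_eq_eval {X 𝕜 : Type*} [TopologicalSpace X]
    [CompactSpace X] [T2Space X] [RCLike 𝕜] (ψ : C(X, 𝕜) →ₐ[𝕜] 𝕜) :
    ∃ x : X, ∀ f : C(X, 𝕜), ψ f = f x := by
  obtain ⟨x, hx⟩ := (CharacterSpace.homeoEval X 𝕜).surjective (CharacterSpace.equivAlgHom.symm ψ)
  exact ⟨x, fun f ↦ congr($hx f).symm⟩

section

variable {K : Type*} [TopologicalSpace K] [CompactSpace K] [T2Space K]

theorem AlgHom.spectralRadius_apply_eq_zero {𝔇 : Type*} [NormedCommRing 𝔇] [NormedAlgebra ℂ 𝔇]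
    [CompleteSpace 𝔇] [NormOneClass 𝔇] (G : C(K, ℂ) →ₐ[ℂ] 𝔇) {u g : C(K, ℂ)}
    (hg : ∀ w, ‖u w‖ ≤ ‖G u‖ → g w = 0) : spectralRadius ℂ (G g) = 0 := by
  have hspec : ∀ z ∈ spectrum ℂ (G g), z = 0 := by
    intro z hz
    obtain ⟨χ, rfl⟩ := CharacterSpace.mem_spectrum_iff_exists.mp hz
    obtain ⟨w, hχ⟩ :=
      ContinuousMap.exists_algHom_apply_eq_eval ((CharacterSpace.equivAlgHom χ).comp G)
    have hχu : ‖u w‖ ≤ ‖G u‖ :=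
      hχ u ▸ spectrum.norm_le_norm_of_mem (AlgHom.apply_mem_spectrum χ (G u))
    exact (hχ g).trans (hg w hχu)
  refine nonpos_iff_eq_zero.mp (iSup₂_le fun z hz ↦ ?_)
  simp [hspec z hz]

theorem AlgHom.tendsto_norm_apply_pow_nhds_zero {𝔅 : Type*} [NormedRing 𝔅] [NormedAlgebra ℂ 𝔅]
    [CompleteSpace 𝔅] [NormOneClass 𝔅] (G : C(K, ℂ) →ₐ[ℂ] 𝔅) {u g : C(K, ℂ)}
    (hg : ∀ w, ‖u w‖ ≤ ‖G u‖ → g w = 0) : Tendsto (fun n ↦ ‖G g ^ n‖) atTop (𝓝 0) := by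
  let D := G.range.topologicalClosure
  have hcomm : ∀ y z : G.range, y * z = z * y := by
    rintro ⟨_, p, hp⟩ ⟨_, q, hq⟩
    ext
    simp only [MulMemClass.mk_mul_mk, ← hp, ← hq, ← map_mul, mul_comm p q]
  let _ : NormedCommRing D :=
    { (inferInstance : NormedRing D), G.range.commRingTopologicalClosure hcomm with }
  have : CompleteSpace D := G.range.isClosed_topologicalClosure.completeSpace_coe
  have : NormOneClass D := ⟨norm_one (α := 𝔅)⟩
  have hmem : ∀ p, G p ∈ D := fun p ↦ G.range.le_topologicalClosure ⟨p, rfl⟩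
  have hrad := AlgHom.spectralRadius_apply_eq_zero (G.codRestrict D hmem) hg
  exact (tendsto_norm_pow_of_spectralRadius_eq_zero hrad).congr fun n ↦
    congr_arg norm (SubmonoidClass.coe_pow _ n)

end

instance WithLp.unitization_normOneClass {𝕜 B : Type*} [NormedField 𝕜] [NonUnitalNormedRing B]
    [NormedSpace 𝕜 B] [IsScalarTower 𝕜 B B] [SMulCommClass 𝕜 B B] :
    NormOneClass (WithLp 1 (Unitization 𝕜 B)) :=
  ⟨by
    rw [WithLp.unitization_norm_def]
    exact (congr_arg₂ (· + ·) norm_one norm_zero).trans (add_zero 1)⟩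

noncomputable def radialCutoff (r s : ℝ) (z : ℂ) : ℂ :=
  (min 1 (max 0 (‖z‖ - r) / (s - r)) : ℝ)

theorem continuous_radialCutoff (r s : ℝ) : Continuous (radialCutoff r s) := by
  unfold radialCutoff
  fun_prop

theorem radialCutoff_of_norm_le {r s : ℝ} {z : ℂ} (hz : ‖z‖ ≤ r) : radialCutoff r s z = 0 := by
  simp [radialCutoff, hz]

theorem radialCutoff_of_le_norm {r s : ℝ} {z : ℂ} (hrs : r < s) (hz : s ≤ ‖z‖) :
    radialCutoff r s z = 1 := by
  have : 1 ≤ max 0 (‖z‖ - r) / (s - r) :=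
    (one_le_div (sub_pos.2 hrs)).2 (le_max_of_le_right (by linarith))
  simp [radialCutoff, min_eq_left this]

theorem radialCutoff_mul_radialCutoff {r s r' s' : ℝ} (hrs : r < s) (hs : s ≤ r') (z : ℂ) :
    radialCutoff r' s' z * radialCutoff r s z = radialCutoff r' s' z := by
  rcases le_or_gt ‖z‖ r' with hz | hz
  · rw [radialCutoff_of_norm_le hz, zero_mul]
  · rw [radialCutoff_of_le_norm hrs (hs.trans hz.le), mul_one]

section

variable {A B : Type*} [NonUnitalCStarAlgebra A] [NonUnitalNormedRing B] [NormedSpace ℂ B]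
  [IsScalarTower ℂ B B] [SMulCommClass ℂ B B] [CompleteSpace B]

theorem tendsto_norm_map_cfcₙ_pow_nhds_zero (φ : A →ₙₐ[ℂ] B) (x : A) [IsStarNormal x] {e : ℂ → ℂ}
    (he : Continuous e) (he_zero : ∀ z, ‖z‖ ≤ ‖φ x‖ → e z = 0) :
    Tendsto (fun n ↦ ‖φ (cfcₙ (fun z ↦ e z ^ n) x)‖) atTop (𝓝 0) := by
  -- `B` may lack a unit, and its regular representation need not be isometric, so we unitize
  -- with the `ℓ¹` norm, in which `B` embeds isometrically.
  let Ψ : Unitization ℂ A →ₐ[ℂ] WithLp 1 (Unitization ℂ B) :=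
    (WithLp.unitizationAlgEquiv ℂ).symm.toAlgHom.comp
      (Unitization.lift ((Unitization.inrNonUnitalAlgHom ℂ B).comp φ))
  have hΨ : ∀ a : A, ‖Ψ a‖ = ‖φ a‖ := fun a ↦ by
    simp only [Unitization.lift_apply, AlgHom.coe_comp, AlgEquiv.coe_toAlgHom, Function.comp_apply,
      NonUnitalAlgHom.toAlgHom_apply, Unitization.fst_inr, map_zero, Unitization.snd_inr,
      NonUnitalAlgHom.coe_comp, Unitization.inrNonUnitalAlgHom_toFun, zero_add, Ψ]
    exact WithLp.unitization_norm_inr (𝕜 := ℂ) (φ a)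
  let x' : Unitization ℂ A := x
  have hx' : IsStarNormal x' := Unitization.isStarNormal_inr.2 ‹_›
  let G := Ψ.comp (cfcHom hx').toAlgHom
  let u : C(spectrum ℂ x', ℂ) := (ContinuousMap.id ℂ).restrict _
  let g : C(spectrum ℂ x', ℂ) := ⟨_, he.continuousOn.domRestrict⟩
  have hGu : G u = Ψ x' := congr_arg Ψ (cfcHom_id hx')
  have hGg : G g = Ψ (cfc e x') := by
    rw [cfc_apply e x' hx' he.continuousOn]
    rfl
  have hpow := AlgHom.tendsto_norm_apply_pow_nhds_zero G (u := u) (g := g) fun w hw ↦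
    he_zero w (by rwa [hGu, hΨ] at hw)
  have he0 : e 0 = 0 := he_zero 0 (by simp)
  -- for `n = 0`, `z ↦ e z ^ 0` does not vanish at `0` and `cfcₙ` returns the junk value `0`
  refine hpow.congr' ?_
  filter_upwards [eventually_ge_atTop 1] with n hn
  rw [hGg, ← map_pow, ← cfc_pow e n x',
    ← Unitization.complex_cfcₙ_eq_cfc_inr x _ (by simp [he0]; omega), hΨ]

theorem map_cfcₙ_eq_zero_of_mul_eq_self (φ : A →ₙₐ[ℂ] B) (x : A) [IsStarNormal x]
    {e f : ℂ → ℂ} (he : Continuous e) (he_zero : ∀ z, ‖z‖ ≤ ‖φ x‖ → e z = 0)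
    (hf : Continuous f) (hfe : ∀ z, f z * e z = f z) : φ (cfcₙ f x) = 0 := by
  have he0 : e 0 = 0 := he_zero 0 (by simp)
  have hf0 : f 0 = 0 := by rw [← hfe 0, he0, mul_zero]
  have hfe_pow : ∀ n z, f z * e z ^ n = f z := fun n z ↦ by
    induction n with
    | zero => rw [pow_zero, mul_one]
    | succ n ih => rw [pow_succ, ← mul_assoc, ih, hfe]
  have hbound : ∀ᶠ n in atTop,
      ‖φ (cfcₙ f x)‖ ≤ ‖φ (cfcₙ f x)‖ * ‖φ (cfcₙ (fun z ↦ e z ^ n) x)‖ := by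
    filter_upwards [eventually_ge_atTop 1] with n hn
    have hsplit : cfcₙ f x = cfcₙ f x * cfcₙ (fun z ↦ e z ^ n) x := by
      rw [← cfcₙ_mul f (fun z ↦ e z ^ n) x hf.continuousOn hf0 (he.pow n).continuousOn
        (by simp [he0]; omega)]
      exact cfcₙ_congr fun z _ ↦ (hfe_pow n z).symm
    calc ‖φ (cfcₙ f x)‖ = ‖φ (cfcₙ f x) * φ (cfcₙ (fun z ↦ e z ^ n) x)‖ := by
          rw [← map_mul, ← hsplit]
      _ ≤ _ := norm_mul_le _ _
  have hlim := (tendsto_norm_map_cfcₙ_pow_nhds_zero φ x he he_zero).const_mul ‖φ (cfcₙ f x)‖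
  rw [mul_zero] at hlim
  exact norm_le_zero_iff.mp (le_of_tendsto_of_tendsto tendsto_const_nhds hlim hbound)

theorem norm_le_norm_map_of_isStarNormal (φ : A →ₙₐ[ℂ] B) (hφ : Function.Injective φ)
    (x : A) [IsStarNormal x] : ‖x‖ ≤ ‖φ x‖ := by
  by_contra! hlt
  obtain ⟨s, hρs, hsR⟩ := exists_between hlt
  have hφf : φ (cfcₙ (radialCutoff s ‖x‖) x) = 0 :=
    map_cfcₙ_eq_zero_of_mul_eq_self φ x (continuous_radialCutoff _ s)
      (fun z ↦ radialCutoff_of_norm_le) (continuous_radialCutoff s _)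
      (radialCutoff_mul_radialCutoff hρs le_rfl)
  have hf : cfcₙ (radialCutoff s ‖x‖) x = cfcₙ (0 : ℂ → ℂ) x := by
    rw [cfcₙ_zero]
    exact hφ (by rw [hφf, map_zero])
  obtain ⟨⟨z, hz, hzx⟩, -⟩ :=
    NonUnitalIsometricContinuousFunctionalCalculus.isGreatest_norm_quasispectrum (𝕜 := ℂ) x
  have hfz : radialCutoff s ‖x‖ z = 0 :=
    (eqOn_of_cfcₙ_eq_cfcₙ hf (hf := (continuous_radialCutoff s _).continuousOn)
      (hf0 := radialCutoff_of_norm_le (norm_zero.trans_le ((norm_nonneg _).trans hρs.le)))) hz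
  rw [radialCutoff_of_le_norm hsR hzx.ge] at hfz
  exact one_ne_zero hfz

end

theorem injective_star_hom_norm_ge_general {A B : Type*}
    [NonUnitalNormedRing A] [NormedSpace ℂ A] [IsScalarTower ℂ A A] [SMulCommClass ℂ A A]
    [CompleteSpace A] [StarRing A] [CStarRing A] [StarModule ℂ A]
    [NonUnitalNormedRing B] [NormedSpace ℂ B] [IsScalarTower ℂ B B] [SMulCommClass ℂ B B]
    [CompleteSpace B] [StarRing B] [NormedStarGroup B]
    (φ : A →ₙₐ[ℂ] B) (hφ : ∀ a : A, φ (star a) = star (φ a))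
    (hinj : Function.Injective φ) :
    ∀ a : A, ‖a‖ ≤ ‖φ a‖ := by
  let _ : NonUnitalCStarAlgebra A := {}
  intro a
  have hself : ‖a‖ * ‖a‖ ≤ ‖φ a‖ * ‖φ a‖ :=
    calc ‖a‖ * ‖a‖ = ‖star a * a‖ := CStarRing.norm_star_mul_self.symm
      _ ≤ ‖φ (star a * a)‖ :=
        have := (IsSelfAdjoint.star_mul_self a).isStarNormal
        norm_le_norm_map_of_isStarNormal φ hinj _
      _ = ‖star (φ a) * φ a‖ := by rw [map_mul, hφ]
      _ ≤ ‖φ a‖ * ‖φ a‖ := (norm_mul_le _ _).trans_eq (by rw [norm_star])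
  exact mul_self_le_mul_self_iff (norm_nonneg a) (norm_nonneg _) |>.mpr hself

/-- An injective star algebra homomorphism from a C*-algebra into an involutive
complex Banach algebra is norm increasing. -/
theorem injective_star_hom_norm_ge {A B : Type*}
    [NonUnitalNormedRing A] [NormedSpace ℂ A] [IsScalarTower ℂ A A] [SMulCommClass ℂ A A]
    [CompleteSpace A] [StarRing A] [CStarRing A] [StarModule ℂ A]
    [NonUnitalNormedRing B] [NormedSpace ℂ B] [IsScalarTower ℂ B B] [SMulCommClass ℂ B B]
    [CompleteSpace B] [StarRing B] [NormedStarGroup B] [StarModule ℂ B]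
    (φ : A →ₙₐ[ℂ] B) (hφ : ∀ a : A, φ (star a) = star (φ a))
    (hinj : Function.Injective φ) :
    ∀ a : A, ‖a‖ ≤ ‖φ a‖ :=
  injective_star_hom_norm_ge_general φ hφ hinj
end

section
/- Let X be a locally compact Hausdorff topological space. The map g ↦ (L_g, R_g), where L_g(f) := gf and R_g(f) := fg for f ∈ C₀(X), is an isometric *-isomorphism from the C*-algebra C_b(X) of bounded continuous complex-valued functions on X onto the multiplier algebra M(C₀(X)) of the C*-algebra C₀(X) of continuous complex-valued functions on X vanishing at infinity. -/
/-!
A bounded continuous `g` acts on `C₀(X)` by pointwise multiplication. Conversely, let `(L, R)` be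
a multiplier and `x ∈ X`; Urysohn's lemma gives `e ∈ C₀(X)` with `‖e‖ ≤ 1` and `e = 1` near `x`.
Evaluating `R(e) f = e L(f)` and `R(f) e = f L(e)` at `x` yields
`L(f)(x) = L(e)(x) f(x) = R(f)(x)` for every `f`, so `g(x) := L(e)(x)` does not depend on `e`.
It is continuous because it agrees with `L(e)` near `x`, it is bounded by `‖L‖`, and
`(L, R) = (L_g, R_g)`. Finally, an injective *-homomorphism between C*-algebras is isometric.
-/

open ZeroAtInfty
open scoped MultiplierAlgebra BoundedContinuousFunction Topology
open Filter

lemma ZeroAtInftyContinuousMap.norm_apply_le {X β : Type*} [TopologicalSpace X]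
    [SeminormedAddCommGroup β] (f : C₀(X, β)) (x : X) : ‖f x‖ ≤ ‖f‖ :=
  norm_toBCF_eq_norm (f := f) ▸ f.toBCF.norm_coe_le_norm x

section

variable {X 𝕜 : Type*} [TopologicalSpace X] [RCLike 𝕜]

lemma DoubleCentralizer.zeroAtInfty_ext {a b : 𝓜(𝕜, C₀(X, 𝕜))}
    (h₁ : ∀ f x, a.fst f x = b.fst f x) (h₂ : ∀ f x, a.snd f x = b.snd f x) : a = b :=
  DoubleCentralizer.ext _ _ _ _ <| Prod.ext
    (ContinuousLinearMap.ext fun f => ZeroAtInftyContinuousMap.ext (h₁ f))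
    (ContinuousLinearMap.ext fun f => ZeroAtInftyContinuousMap.ext (h₂ f))

namespace BoundedContinuousFunction

noncomputable def mulZeroAtInfty (g : X →ᵇ 𝕜) : C₀(X, 𝕜) →L[𝕜] C₀(X, 𝕜) :=
  LinearMap.mkContinuous
    { toFun f := ⟨⟨fun x => g x * f x, g.continuous.mul (map_continuous f)⟩,
        isBoundedUnder_le_mul_tendsto_zero (isBoundedUnder_of ⟨‖g‖, g.norm_coe_le_norm⟩)
          (zero_at_infty f)⟩
      map_add' f₁ f₂ := ZeroAtInftyContinuousMap.ext fun x => mul_add _ _ _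
      map_smul' c f := ZeroAtInftyContinuousMap.ext fun x => mul_left_comm _ _ _ }
    ‖g‖ fun f => by
      rw [← ZeroAtInftyContinuousMap.norm_toBCF_eq_norm]
      refine (norm_le (by positivity)).2 fun x => (norm_mul_le _ _).trans ?_
      exact mul_le_mul (g.norm_coe_le_norm x) (f.norm_apply_le x) (norm_nonneg _) (norm_nonneg _)

@[simp]
lemma mulZeroAtInfty_apply (g : X →ᵇ 𝕜) (f : C₀(X, 𝕜)) (x : X) :
    g.mulZeroAtInfty f x = g x * f x :=
  rfl

noncomputable def toMultiplier : (X →ᵇ 𝕜) →⋆ₐ[𝕜] 𝓜(𝕜, C₀(X, 𝕜)) where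
  toFun g := ⟨(g.mulZeroAtInfty, g.mulZeroAtInfty), fun f₁ f₂ =>
    ZeroAtInftyContinuousMap.ext fun x => by simp [mul_assoc, mul_left_comm]⟩
  map_one' := DoubleCentralizer.zeroAtInfty_ext (fun f x => by simp) (fun f x => by simp)
  map_mul' g h := DoubleCentralizer.zeroAtInfty_ext (fun f x => by simp [mul_assoc])
    (fun f x => by simp [mul_assoc, mul_left_comm])
  map_zero' := DoubleCentralizer.zeroAtInfty_ext (fun f x => by simp) (fun f x => by simp)
  map_add' g h := DoubleCentralizer.zeroAtInfty_ext (fun f x => by simp [add_mul]) (fun f x => by simp [add_mul])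
  commutes' k := DoubleCentralizer.zeroAtInfty_ext (fun f x => by simp) (fun f x => by simp)
  map_star' g := DoubleCentralizer.zeroAtInfty_ext (fun f x => by simp [mul_comm]) (fun f x => by simp [mul_comm])

lemma toMultiplier_fst_apply (g : X →ᵇ 𝕜) (f : C₀(X, 𝕜)) (x : X) :
    (toMultiplier g).fst f x = g x * f x :=
  rfl

end BoundedContinuousFunction

namespace DoubleCentralizer

open ZeroAtInftyContinuousMap

lemma fst_apply_eq_mul (a : 𝓜(𝕜, C₀(X, 𝕜))) {e : C₀(X, 𝕜)} {x : X} (he : e x = 1)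
    (f : C₀(X, 𝕜)) : a.fst f x = a.fst e x * f x := by
  have hef := congr($(a.central e f) x)
  have hee := congr($(a.central e e) x)
  simp only [mul_apply, he, one_mul, mul_one] at hef hee
  rw [← hef, hee]

lemma snd_apply_eq_mul (a : 𝓜(𝕜, C₀(X, 𝕜))) {e : C₀(X, 𝕜)} {x : X} (he : e x = 1)
    (f : C₀(X, 𝕜)) : a.snd f x = a.fst e x * f x := by
  have hfe := congr($(a.central f e) x)
  simp only [mul_apply, he, mul_one] at hfe
  rw [hfe, mul_comm]

end DoubleCentralizer

variable [RegularSpace X] [LocallyCompactSpace X]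

namespace ZeroAtInftyContinuousMap

lemma exists_norm_le_one_eventually_eq_one (x : X) :
    ∃ e : C₀(X, 𝕜), ‖e‖ ≤ 1 ∧ ∀ᶠ y in 𝓝 x, e y = 1 := by
  obtain ⟨K, hK, hKx⟩ := exists_compact_mem_nhds x
  obtain ⟨u, hu_one, -, hu_supp, hu_mem⟩ :=
    exists_continuous_one_zero_of_isCompact hK isClosed_empty (Set.disjoint_empty K)
  let e : C₀(X, 𝕜) := ⟨⟨fun y => (u y : 𝕜), RCLike.continuous_ofReal.comp u.continuous⟩,
    (hu_supp.comp_left RCLike.ofReal_zero).is_zero_at_infty⟩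
  refine ⟨e, ?_, eventually_of_mem hKx fun y hy => by simp [e, hu_one hy]⟩
  rw [← norm_toBCF_eq_norm]
  refine (BoundedContinuousFunction.norm_le zero_le_one).2 fun y => ?_
  change ‖(u y : 𝕜)‖ ≤ 1
  rw [RCLike.norm_ofReal, abs_le]
  exact ⟨by linarith [(hu_mem y).1], (hu_mem y).2⟩

variable (𝕜) in
noncomputable def bumpAt (x : X) : C₀(X, 𝕜) :=
  (exists_norm_le_one_eventually_eq_one x).choose

lemma norm_bumpAt_le (x : X) : ‖bumpAt 𝕜 x‖ ≤ 1 :=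
  (exists_norm_le_one_eventually_eq_one x).choose_spec.1

lemma eventually_bumpAt_eq_one (x : X) : ∀ᶠ y in 𝓝 x, bumpAt 𝕜 x y = 1 :=
  (exists_norm_le_one_eventually_eq_one x).choose_spec.2

lemma bumpAt_self (x : X) : bumpAt 𝕜 x x = 1 :=
  (eventually_bumpAt_eq_one x).self_of_nhds

end ZeroAtInftyContinuousMap

namespace DoubleCentralizer

open ZeroAtInftyContinuousMap

lemma continuous_fst_bumpAt_apply (a : 𝓜(𝕜, C₀(X, 𝕜))) :
    Continuous fun x => a.fst (bumpAt 𝕜 x) x := by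
  refine continuous_iff_continuousAt.2 fun x => ?_
  refine (map_continuous (a.fst (bumpAt 𝕜 x))).continuousAt.congr ?_
  filter_upwards [eventually_bumpAt_eq_one (𝕜 := 𝕜) x] with y hy
  rw [a.fst_apply_eq_mul hy (bumpAt 𝕜 y), bumpAt_self, mul_one]

noncomputable def toBCF (a : 𝓜(𝕜, C₀(X, 𝕜))) : X →ᵇ 𝕜 :=
  .ofNormedAddCommGroup _ a.continuous_fst_bumpAt_apply ‖a.fst‖ fun x =>
    calc ‖a.fst (bumpAt 𝕜 x) x‖ ≤ ‖a.fst (bumpAt 𝕜 x)‖ := norm_apply_le _ x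
      _ ≤ ‖a.fst‖ * 1 := a.fst.le_of_opNorm_le_of_le le_rfl (norm_bumpAt_le x)
      _ = ‖a.fst‖ := mul_one _

lemma toBCF_apply (a : 𝓜(𝕜, C₀(X, 𝕜))) (x : X) : a.toBCF x = a.fst (bumpAt 𝕜 x) x :=
  rfl

lemma toMultiplier_toBCF (a : 𝓜(𝕜, C₀(X, 𝕜))) : a.toBCF.toMultiplier = a :=
  zeroAtInfty_ext (fun f x => (a.fst_apply_eq_mul (bumpAt_self x) f).symm)
    (fun f x => (a.snd_apply_eq_mul (bumpAt_self x) f).symm)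

lemma toBCF_toMultiplier (g : X →ᵇ 𝕜) : g.toMultiplier.toBCF = g :=
  BoundedContinuousFunction.ext fun x => by
    rw [toBCF_apply, BoundedContinuousFunction.toMultiplier_fst_apply, bumpAt_self, mul_one]

end DoubleCentralizer

namespace BoundedContinuousFunction

lemma toMultiplier_bijective :
    Function.Bijective (toMultiplier : (X →ᵇ 𝕜) → 𝓜(𝕜, C₀(X, 𝕜))) :=
  Function.bijective_iff_has_inverse.2
    ⟨DoubleCentralizer.toBCF, DoubleCentralizer.toBCF_toMultiplier,
      DoubleCentralizer.toMultiplier_toBCF⟩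

lemma toMultiplier_isometry : Isometry (toMultiplier : (X →ᵇ ℂ) → 𝓜(ℂ, C₀(X, ℂ))) := by
  exact NonUnitalStarAlgHom.isometry _ (toMultiplier_bijective (X := X) (𝕜 := ℂ)).1

end BoundedContinuousFunction

end

open BoundedContinuousFunction in
/-- For a locally compact Hausdorff space `X`, the map `g ↦ (L_g, R_g)`, where
`L_g f = g f` and `R_g f = f g` pointwise, is an isometric *-isomorphism from the
C*-algebra `C_b(X)` of bounded continuous functions onto the multiplier algebra
`M(C₀(X))` of the C*-algebra of continuous functions vanishing at infinity. -/
theorem multiplier_C0_eq_Cb {X : Type*} [TopologicalSpace X] [LocallyCompactSpace X]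
    [T2Space X] :
    ∃ Φ : BoundedContinuousFunction X ℂ → DoubleCentralizer ℂ C₀(X, ℂ),
      (∀ (g : BoundedContinuousFunction X ℂ) (f : C₀(X, ℂ)) (x : X),
        ((Φ g).toProd.1 f) x = g x * f x) ∧
      (∀ (g : BoundedContinuousFunction X ℂ) (f : C₀(X, ℂ)) (x : X),
        ((Φ g).toProd.2 f) x = f x * g x) ∧
      Function.Bijective Φ ∧
      Isometry Φ ∧
      (∀ g h : BoundedContinuousFunction X ℂ, Φ (g + h) = Φ g + Φ h) ∧
      (∀ (c : ℂ) (g : BoundedContinuousFunction X ℂ), Φ (c • g) = c • Φ g) ∧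
      (∀ g h : BoundedContinuousFunction X ℂ, Φ (g * h) = Φ g * Φ h) ∧
      (∀ g : BoundedContinuousFunction X ℂ, Φ (star g) = star (Φ g)) :=
  ⟨toMultiplier, toMultiplier_fst_apply, fun g f x => mul_comm (g x) (f x),
    toMultiplier_bijective, toMultiplier_isometry, map_add _, map_smul _, map_mul _, map_star _⟩
end

section
/- Let H be a complex Hilbert space and let M be a C*-subalgebra of B(H) acting non-degenerately on H, i.e., if x ∈ H satisfies Tx = 0 for all T ∈ M, then x = 0. Then the following are equivalent: (i) M = M'' (M equals its double commutant in B(H)); (ii) M is closed in the weak operator topology of B(H); (iii) M is closed in the strong operator topology of B(H) (von Neumann bicommutant theorem). -/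
/-!
Commutants are closed in the weak operator topology and the strong operator topology is finer,
so the content of the theorem is that `M''` lies in the strong closure of `M`.

For a single vector `x`, let `P` be the orthogonal projection onto the closure of `M x`. This
subspace is invariant under `M`, and since `M` is self-adjoint so is its orthogonal complement;
hence `P ∈ M'`. Nondegeneracy gives `x ∈ closure (M x)`: every `A ∈ M` kills `x - P x`, as
`A (x - P x) = (1 - P) (A x) = 0`. So for `T ∈ M''` we get `T x = T P x = P T x ∈ closure (M x)`.

Finitely many vectors `x₁, …, xₙ` are handled by running the same argument for the diagonal copy
of `M` acting on `H ⊕ ⋯ ⊕ H`: an operator commuting with it has all its matrix entries in `M'`,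
so the diagonal copy of `T` lies in its bicommutant.
-/

open Set Topology

theorem mem_closure_pi_of_forall_finset_restrict {ι : Type*} {X : ι → Type*}
    [∀ i, TopologicalSpace (X i)] {f : ∀ i, X i} {S : Set (∀ i, X i)}
    (h : ∀ I : Finset ι, I.restrict f ∈ closure (I.restrict '' S)) : f ∈ closure S := by
  refine mem_closure_iff_nhds.2 fun U hU => ?_
  rw [nhds_pi, Filter.mem_pi'] at hU
  obtain ⟨I, t, ht, hsub⟩ := hU
  have hV : univ.pi (fun i : I => t i) ∈ 𝓝 (I.restrict f) :=
    set_pi_mem_nhds finite_univ fun i _ => ht i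
  obtain ⟨_, hgV, g, hgS, rfl⟩ := mem_closure_iff_nhds.1 (h I) _ hV
  exact ⟨g, hsub fun i hi => hgV ⟨i, hi⟩ (mem_univ _), hgS⟩

theorem Submodule.commute_starProjection_iff {𝕜 E : Type*} [RCLike 𝕜] [NormedAddCommGroup E]
    [InnerProductSpace 𝕜 E] [CompleteSpace E] (K : Submodule 𝕜 E) [K.HasOrthogonalProjection]
    (A : E →L[𝕜] E) :
    Commute K.starProjection A ↔
      K ∈ Module.End.invtSubmodule A ∧ K ∈ Module.End.invtSubmodule A.adjoint := by
  rw [ContinuousLinearMap.IsIdempotentElem.commute_iff K.isIdempotentElem_starProjection,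
    K.range_starProjection, K.ker_starProjection,
    ← ContinuousLinearMap.mem_invtSubmodule_adjoint_iff]

namespace NonUnitalStarSubalgebra

open ContinuousLinearMap

variable {𝕜 E : Type*} [RCLike 𝕜] [NormedAddCommGroup E] [InnerProductSpace 𝕜 E]
  [CompleteSpace E] (N : NonUnitalStarSubalgebra 𝕜 (E →L[𝕜] E))

def IsNondegenerate : Prop :=
  ∀ x : E, (∀ A ∈ N, A x = 0) → x = 0

noncomputable def cyclicSubspace (x : E) : Submodule 𝕜 E :=
  (N.toNonUnitalSubalgebra.toSubmodule.map
    (apply 𝕜 E x : (E →L[𝕜] E) →ₗ[𝕜] E)).topologicalClosure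

theorem coe_cyclicSubspace (x : E) :
    (N.cyclicSubspace x : Set E) = closure ((fun A : E →L[𝕜] E => A x) '' N) := by
  rw [cyclicSubspace, Submodule.topologicalClosure_coe, Submodule.map_coe]
  rfl

theorem apply_mem_cyclicSubspace {A : E →L[𝕜] E} (hA : A ∈ N) (x : E) :
    A x ∈ N.cyclicSubspace x := by
  rw [← SetLike.mem_coe, coe_cyclicSubspace]
  exact subset_closure ⟨A, hA, rfl⟩

theorem cyclicSubspace_mem_invtSubmodule {A : E →L[𝕜] E} (hA : A ∈ N) (x : E) :
    N.cyclicSubspace x ∈ Module.End.invtSubmodule (A : E →ₗ[𝕜] E) := by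
  rw [Module.End.mem_invtSubmodule, ← SetLike.coe_subset_coe, Submodule.comap_coe,
    coe_cyclicSubspace]
  refine closure_minimal ?_ (isClosed_closure.preimage A.continuous)
  rintro _ ⟨B, hB, rfl⟩
  exact subset_closure ⟨A * B, mul_mem hA hB, rfl⟩

instance (x : E) : (N.cyclicSubspace x).HasOrthogonalProjection := by
  unfold cyclicSubspace; infer_instance

theorem commute_starProjection_cyclicSubspace {A : E →L[𝕜] E} (hA : A ∈ N) (x : E) :
    Commute (N.cyclicSubspace x).starProjection A :=
  (Submodule.commute_starProjection_iff _ A).2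
    ⟨N.cyclicSubspace_mem_invtSubmodule hA x, N.cyclicSubspace_mem_invtSubmodule (star_mem hA) x⟩

theorem mem_cyclicSubspace_self (hN : N.IsNondegenerate) (x : E) : x ∈ N.cyclicSubspace x := by
  set P := (N.cyclicSubspace x).starProjection
  suffices x - P x = 0 from Submodule.starProjection_eq_self_iff.1 (sub_eq_zero.1 this).symm
  refine hN _ fun A hA => ?_
  calc A (x - P x) = A x - P (A x) := by
        rw [map_sub, ← mul_apply_eq_comp, ← (N.commute_starProjection_cyclicSubspace hA x).eq,
          mul_apply_eq_comp]
    _ = 0 := by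
        rw [Submodule.starProjection_eq_self_iff.2 (N.apply_mem_cyclicSubspace hA x), sub_self]

theorem apply_mem_cyclicSubspace_of_mem_centralizer_centralizer (hN : N.IsNondegenerate)
    {T : E →L[𝕜] E} (hT : T ∈ Set.centralizer (Set.centralizer (N : Set (E →L[𝕜] E)))) (x : E) :
    T x ∈ N.cyclicSubspace x := by
  set P := (N.cyclicSubspace x).starProjection
  have hPT : P * T = T * P :=
    hT P fun A hA => (N.commute_starProjection_cyclicSubspace hA x).eq.symm
  have hPx : P x = x := Submodule.starProjection_eq_self_iff.2 (N.mem_cyclicSubspace_self hN x)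
  have hPTx : P (T x) = T x := by simpa [hPx] using congr($hPT x)
  exact hPTx ▸ (N.cyclicSubspace x).starProjection_apply_mem (T x)

end NonUnitalStarSubalgebra

namespace ContinuousLinearMap

variable {𝕜 H : Type*} [RCLike 𝕜] [NormedAddCommGroup H] [InnerProductSpace 𝕜 H] {ι : Type*}

variable (ι) in
noncomputable def ampliation (A : H →L[𝕜] H) :
    PiLp 2 (fun _ : ι => H) →L[𝕜] PiLp 2 (fun _ : ι => H) :=
  (PiLp.continuousLinearEquiv 2 𝕜 (fun _ : ι => H)).symm.toContinuousLinearMap ∘L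
    (piMap fun _ => A) ∘L (PiLp.continuousLinearEquiv 2 𝕜 (fun _ : ι => H)).toContinuousLinearMap

@[simp]
theorem ampliation_apply (A : H →L[𝕜] H) (x : PiLp 2 (fun _ : ι => H)) (i : ι) :
    ampliation ι A x i = A (x i) := rfl

theorem ampliation_single [DecidableEq ι] (A : H →L[𝕜] H) (j : ι) (y : H) :
    ampliation ι A (PiLp.single 2 j y) = PiLp.single 2 j (A y) := by
  ext i
  rcases eq_or_ne i j with rfl | hij
  · simp
  · simp [hij]

theorem adjoint_ampliation [Fintype ι] [CompleteSpace H] (A : H →L[𝕜] H) :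
    adjoint (ampliation ι A) = ampliation ι (adjoint A) :=
  ((eq_adjoint_iff _ _).2 fun x y => by simp [PiLp.inner_apply, adjoint_inner_left]).symm

variable (𝕜 H ι) in
noncomputable def ampliationStarAlgHom [Fintype ι] [CompleteSpace H] :
    (H →L[𝕜] H) →⋆ₐ[𝕜] (PiLp 2 (fun _ : ι => H) →L[𝕜] PiLp 2 (fun _ : ι => H)) where
  toFun := ampliation ι
  map_one' := rfl
  map_mul' _ _ := rfl
  map_zero' := rfl
  map_add' _ _ := rfl
  commutes' _ := rfl
  map_star' A := by simp only [star_eq_adjoint, adjoint_ampliation]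

@[simp]
theorem coe_ampliationStarAlgHom [Fintype ι] [CompleteSpace H] :
    ⇑(ampliationStarAlgHom 𝕜 H ι) = ampliation ι := rfl

variable [DecidableEq ι]

noncomputable def matrixEntry (S : PiLp 2 (fun _ : ι => H) →L[𝕜] PiLp 2 (fun _ : ι => H))
    (i j : ι) : H →L[𝕜] H :=
  PiLp.proj 2 (fun _ : ι => H) i ∘L S ∘L
    (PiLp.continuousLinearEquiv 2 𝕜 (fun _ : ι => H)).symm.toContinuousLinearMap ∘L
      single 𝕜 (fun _ : ι => H) j

@[simp]
theorem matrixEntry_apply (S : PiLp 2 (fun _ : ι => H) →L[𝕜] PiLp 2 (fun _ : ι => H))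
    (i j : ι) (y : H) : matrixEntry S i j y = S (PiLp.single 2 j y) i := rfl

theorem apply_eq_sum_matrixEntry [Fintype ι]
    (S : PiLp 2 (fun _ : ι => H) →L[𝕜] PiLp 2 (fun _ : ι => H)) (v : PiLp 2 (fun _ : ι => H))
    (i : ι) : S v i = ∑ j, matrixEntry S i j (v j) := by
  have hv : ∑ j, PiLp.single 2 j (v j) = v := by ext; simp
  conv_lhs => rw [← hv]
  simp [map_sum]

theorem matrixEntry_mem_centralizer {s : Set (H →L[𝕜] H)}
    {S : PiLp 2 (fun _ : ι => H) →L[𝕜] PiLp 2 (fun _ : ι => H)}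
    (hS : S ∈ centralizer (ampliation ι '' s)) (i j : ι) :
    matrixEntry S i j ∈ centralizer s := by
  intro A hA
  ext y
  simpa [mul_apply_eq_comp, ampliation_single] using
    congr($(hS _ ⟨A, hA, rfl⟩) (PiLp.single 2 j y) i)

theorem ampliation_mem_centralizer_centralizer [Fintype ι] {s : Set (H →L[𝕜] H)}
    {T : H →L[𝕜] H} (hT : T ∈ centralizer (centralizer s)) :
    ampliation ι T ∈ centralizer (centralizer (ampliation ι '' s)) := by
  intro S hS
  ext v i
  have hTS (j : ι) (y : H) : matrixEntry S i j (T y) = T (matrixEntry S i j y) :=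
    congr($(hT _ (matrixEntry_mem_centralizer hS i j)) y)
  simp only [mul_apply_eq_comp, ampliation_apply, apply_eq_sum_matrixEntry S, hTS, map_sum]

end ContinuousLinearMap

namespace NonUnitalStarSubalgebra

open ContinuousLinearMap

variable {𝕜 H : Type*} [RCLike 𝕜] [NormedAddCommGroup H] [InnerProductSpace 𝕜 H]
  [CompleteSpace H] (M : NonUnitalStarSubalgebra 𝕜 (H →L[𝕜] H))

theorem comp_mem_closure_image_comp (hM : M.IsNondegenerate) {T : H →L[𝕜] H}
    (hT : T ∈ Set.centralizer (Set.centralizer (M : Set (H →L[𝕜] H)))) {ι : Type*} [Fintype ι]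
    (x : ι → H) : T ∘ x ∈ closure ((fun A : H →L[𝕜] H => A ∘ x) '' M) := by
  classical
  set N := M.map (ampliationStarAlgHom 𝕜 H ι)
  have hN_coe : (N : Set _) = ampliation ι '' (M : Set (H →L[𝕜] H)) := by simp [N]
  have hN : N.IsNondegenerate := by
    intro y hy
    ext i
    refine hM _ fun A hA => ?_
    have hAy : ampliation ι A y = 0 := hy _ (by rw [← SetLike.mem_coe, hN_coe]; exact ⟨A, hA, rfl⟩)
    exact congr($hAy i)
  have hTN : ampliation ι T ∈ Set.centralizer (Set.centralizer (N : Set _)) :=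
    hN_coe ▸ ampliation_mem_centralizer_centralizer hT
  have hTx := N.apply_mem_cyclicSubspace_of_mem_centralizer_centralizer hN hTN (WithLp.toLp 2 x)
  rw [← SetLike.mem_coe, coe_cyclicSubspace, hN_coe, image_image] at hTx
  exact map_mem_closure (f := WithLp.ofLp) (PiLp.continuous_ofLp 2 _) hTx
    (by rintro _ ⟨A, hA, rfl⟩; exact ⟨A, hA, rfl⟩)

end NonUnitalStarSubalgebra

namespace ContinuousLinearMap

variable (𝕜 H : Type*) [RCLike 𝕜] [NormedAddCommGroup H] [InnerProductSpace 𝕜 H]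

abbrev weakOperatorTopology : TopologicalSpace (H →L[𝕜] H) :=
  .induced (fun T p => inner 𝕜 (T p.1) p.2 : (H →L[𝕜] H) → H × H → 𝕜) Pi.topologicalSpace

abbrev strongOperatorTopology : TopologicalSpace (H →L[𝕜] H) :=
  .induced (fun T => (T : H → H)) Pi.topologicalSpace

variable {𝕜 H}

theorem strongOperatorTopology_le_weakOperatorTopology :
    strongOperatorTopology 𝕜 H ≤ weakOperatorTopology 𝕜 H := by
  have hinner : Continuous fun (u : H → H) (p : H × H) => inner 𝕜 (u p.1) p.2 := by fun_prop
  exact (induced_mono (continuous_iff_le_induced.1 hinner)).trans_eq induced_compose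

theorem isClosed_centralizer_weakOperatorTopology [CompleteSpace H] (s : Set (H →L[𝕜] H)) :
    IsClosed[weakOperatorTopology 𝕜 H] (centralizer s) := by
  refine isClosed_induced_iff.2
    ⟨⋂ A ∈ s, ⋂ x, ⋂ y, {u | u (x, adjoint A y) = u (A x, y)}, ?_, ?_⟩
  · exact isClosed_biInter fun A _ => isClosed_iInter fun x => isClosed_iInter fun y =>
      isClosed_eq (continuous_apply _) (continuous_apply _)
  · ext T
    simp only [preimage_iInter, mem_iInter, mem_preimage, mem_ofPred_eq, adjoint_inner_right,
      mem_centralizer_iff, ContinuousLinearMap.ext_iff, ext_iff_inner_right 𝕜 (E := H),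
      mul_apply_eq_comp]

theorem centralizer_centralizer_subset_closure_strongOperatorTopology [CompleteSpace H]
    {M : NonUnitalStarSubalgebra 𝕜 (H →L[𝕜] H)} (hM : M.IsNondegenerate) :
    centralizer (centralizer (M : Set (H →L[𝕜] H))) ⊆ closure[strongOperatorTopology 𝕜 H] M :=
  fun T hT => closure_induced.2 <| mem_closure_pi_of_forall_finset_restrict fun I => by
    rw [image_image]
    exact M.comp_mem_closure_image_comp hM hT ((↑) : I → H)

end ContinuousLinearMap

theorem von_neumann_bicommutant_general {H : Type*} [NormedAddCommGroup H]
    [InnerProductSpace ℂ H] [CompleteSpace H]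
    (M : NonUnitalStarSubalgebra ℂ (H →L[ℂ] H))
    (hnondeg : ∀ x : H, (∀ T ∈ M, T x = 0) → x = 0) :
    List.TFAE
      [ (M : Set (H →L[ℂ] H)) =
          Set.centralizer (Set.centralizer (M : Set (H →L[ℂ] H))),
        @IsClosed _
          (TopologicalSpace.induced
            (fun (T : H →L[ℂ] H) => (fun p : H × H => (inner ℂ (T p.1) p.2 : ℂ)))
            Pi.topologicalSpace)
          (M : Set (H →L[ℂ] H)),
        @IsClosed _
          (TopologicalSpace.induced (fun (T : H →L[ℂ] H) => (T : H → H))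
            Pi.topologicalSpace)
          (M : Set (H →L[ℂ] H)) ] := by
  tfae_have 1 → 2 := fun h => h ▸ ContinuousLinearMap.isClosed_centralizer_weakOperatorTopology _
  tfae_have 2 → 3 := fun h =>
    h.mono ContinuousLinearMap.strongOperatorTopology_le_weakOperatorTopology
  tfae_have 3 → 1 := fun h => subset_centralizer_centralizer.antisymm <| .trans
    (ContinuousLinearMap.centralizer_centralizer_subset_closure_strongOperatorTopology hnondeg)
    (@IsClosed.closure_subset _ (ContinuousLinearMap.strongOperatorTopology ℂ H) _ h)
  tfae_finish

/-- **Von Neumann bicommutant theorem.** Let `M` be a C*-subalgebra of `B(H)` acting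
non-degenerately on the complex Hilbert space `H`.  Then the following are equivalent:
(i) `M` equals its double commutant `M''`;
(ii) `M` is closed in the weak operator topology;
(iii) `M` is closed in the strong operator topology.
The weak (resp. strong) operator topology on `B(H)` is the topology induced by the maps
`T ↦ (fun (x, y) => ⟪T x, y⟫)` (resp. `T ↦ (T : H → H)`) into the corresponding product
spaces. -/
theorem von_neumann_bicommutant {H : Type*} [NormedAddCommGroup H]
    [InnerProductSpace ℂ H] [CompleteSpace H]
    (M : NonUnitalStarSubalgebra ℂ (H →L[ℂ] H))
    (hM : IsClosed (M : Set (H →L[ℂ] H)))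
    (hnondeg : ∀ x : H, (∀ T ∈ M, T x = 0) → x = 0) :
    List.TFAE
      [ (M : Set (H →L[ℂ] H)) =
          Set.centralizer (Set.centralizer (M : Set (H →L[ℂ] H))),
        @IsClosed _
          (TopologicalSpace.induced
            (fun (T : H →L[ℂ] H) => (fun p : H × H => (inner ℂ (T p.1) p.2 : ℂ)))
            Pi.topologicalSpace)
          (M : Set (H →L[ℂ] H)),
        @IsClosed _
          (TopologicalSpace.induced (fun (T : H →L[ℂ] H) => (T : H → H))
            Pi.topologicalSpace)
          (M : Set (H →L[ℂ] H)) ] :=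
  von_neumann_bicommutant_general M hnondeg
end
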